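/- Algorithmic soundness (failure case): if the matching state machine, started with the empty substitution, empty backtracking stack, and continuation [match p against t], reaches the state failure after one or more steps, then there is no substitution θ such that p matches t under θ in the declarative semantics. -/

import Mathlib

namespace PyPM
/-- Terms over a signature of function symbols (names with lists of arguments). -/
inductive Tm where
  | app : String → List Tm → Tm


/-- Basic patterns: variables, function applications, and alternates. -/
inductive Pat where
  | var : String → Pat
  | app : String → List Pat → Pat
  | alt : Pat → Pat → Pat

/-- Substitutions: finite maps from variables to terms (modeled as partial functions). -/
abbrev Subst := String → Option Tm

def emptySubst : Subst := fun _ => none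

def Subst.update (θ : Subst) (x : String) (t : Tm) : Subst :=
  fun y => if y = x then some t else θ y

/-- θ ⊆ θ' : every binding of θ is a binding of θ'. -/
def Subst.le (θ θ' : Subst) : Prop := ∀ x t, θ x = some t → θ' x = some t

/-- Declarative matching semantics: θ ⊢ p ≈ t. -/
inductive Matches : Subst → Pat → Tm → Prop where
  | var {θ : Subst} {x : String} {t : Tm} :
      θ x = some t → Matches θ (.var x) t
  | app {θ : Subst} {f : String} {ps : List Pat} {ts : List Tm}
      (hlen : ps.length = ts.length)
      (hargs : ∀ i (h1 : i < ps.length) (h2 : i < ts.length), Matches θ ps[i] ts[i]) :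
      Matches θ (.app f ps) (.app f ts)
  | alt1 {θ : Subst} {p p' : Pat} {t : Tm} :
      Matches θ p t → Matches θ (.alt p p') t
  | alt2 {θ : Subst} {p p' : Pat} {t : Tm} :
      Matches θ p' t → Matches θ (.alt p p') t

/-- Actions in the machine continuation. -/
inductive Action where
  | doMatch : Pat → Tm → Action

abbrev Cont := List Action
abbrev Frame := Subst × Cont
abbrev Stack := List Frame

/-- Machine states. -/
inductive St where
  | success : Subst → St
  | failure : St
  | running : Subst → Stack → Cont → St

/-- Backtracking: pop the stack, or fail if it is empty. -/
def backtrack : Stack → St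
  | [] => .failure
  | (θ, k) :: stk => .running θ stk k

/-- The step relation of the algorithmic matching machine. -/
inductive Step : St → St → Prop where
  | success {θ stk} :
      Step (.running θ stk []) (.success θ)
  | varBind {θ : Subst} {stk x t k} :
      θ x = none →
      Step (.running θ stk (.doMatch (.var x) t :: k)) (.running (θ.update x t) stk k)
  | varBound {θ : Subst} {stk x t k} :
      θ x = some t →
      Step (.running θ stk (.doMatch (.var x) t :: k)) (.running θ stk k)
  | varConflict {θ : Subst} {stk x t t' k} :
      θ x = some t' → t' ≠ t →
      Step (.running θ stk (.doMatch (.var x) t :: k)) (backtrack stk)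
  | fn {θ stk f ps ts k} :
      ps.length = ts.length →
      Step (.running θ stk (.doMatch (.app f ps) (.app f ts) :: k))
           (.running θ stk (((ps.zip ts).map fun pt => .doMatch pt.1 pt.2) ++ k))
  | fnConflict {θ stk f g ps ts k} :
      f ≠ g ∨ ps.length ≠ ts.length →
      Step (.running θ stk (.doMatch (.app f ps) (.app g ts) :: k)) (backtrack stk)
  | alt {θ stk p p' t k} :
      Step (.running θ stk (.doMatch (.alt p p') t :: k))
           (.running θ ((θ, .doMatch p' t :: k) :: stk) (.doMatch p t :: k))

end PyPM

/-!
A running state is *viable* if its current frame or some frame on its backtracking stack can be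
completed: some extension of the frame's substitution satisfies every pending match. If `p`
matches `t` under some `θ`, the initial state is viable (`θ` extends the empty substitution), and
every step preserves viability: a conflict refutes the current frame, so the viable frame is on the
stack and survives the pop; an alternate whose left branch fails leaves its right branch, which
holds, on the stack. Since `failure` is not viable, the machine cannot reach it.
-/

namespace PyPM

def Action.Holds (θ : Subst) : Action → Prop
  | .doMatch p t => Matches θ p t

def Frame.Satisfiable (f : Frame) : Prop :=
  ∃ θ, f.1.le θ ∧ ∀ a ∈ f.2, a.Holds θ

def St.Viable : St → Prop
  | .success _ => True
  | .failure => False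
  | .running σ stk k => Frame.Satisfiable (σ, k) ∨ ∃ f ∈ stk, f.Satisfiable

theorem emptySubst_le (θ : Subst) : emptySubst.le θ := by
  intro x t hx
  cases hx

theorem Subst.update_le {σ θ : Subst} {x : String} {t : Tm} (h : σ.le θ) (hx : θ x = some t) :
    (σ.update x t).le θ := by
  intro y u hy
  unfold Subst.update at hy
  split_ifs at hy with hyx
  · obtain rfl := Option.some.inj hy
    exact hyx ▸ hx
  · exact h y u hy

theorem Matches.var_inv {θ : Subst} {x : String} {t : Tm} (h : Matches θ (.var x) t) :
    θ x = some t := by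
  cases h with
  | var hx => exact hx

theorem Matches.app_inv {θ : Subst} {f g : String} {ps : List Pat} {ts : List Tm}
    (h : Matches θ (.app f ps) (.app g ts)) :
    f = g ∧ ps.length = ts.length ∧
      ∀ a ∈ (ps.zip ts).map (fun pt => Action.doMatch pt.1 pt.2), a.Holds θ := by
  cases h with
  | app hlen hargs =>
    refine ⟨rfl, hlen, ?_⟩
    intro a ha
    obtain ⟨_, hpt, rfl⟩ := List.mem_map.1 ha
    obtain ⟨i, hi, rfl⟩ := List.mem_iff_getElem.1 hpt
    rw [List.length_zip] at hi
    simp only [List.getElem_zip]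
    exact hargs i (by omega) (by omega)

theorem Matches.alt_inv {θ : Subst} {p p' : Pat} {t : Tm} (h : Matches θ (.alt p p') t) :
    Matches θ p t ∨ Matches θ p' t := by
  cases h with
  | alt1 h => exact .inl h
  | alt2 h => exact .inr h

theorem viable_backtrack {stk : Stack} (h : ∃ f ∈ stk, f.Satisfiable) :
    (backtrack stk).Viable := by
  obtain ⟨f, hf, hsat⟩ := h
  cases stk with
  | nil => cases hf
  | cons top rest =>
    rcases List.mem_cons.1 hf with rfl | hrest
    · exact .inl hsat
    · exact .inr ⟨f, hrest, hsat⟩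

theorem Step.viable_of_stack {σ : Subst} {stk : Stack} {k : Cont} {s : St}
    (hstep : Step (.running σ stk k) s) (h : ∃ f ∈ stk, f.Satisfiable) : s.Viable := by
  cases hstep with
  | success => trivial
  | varConflict => exact viable_backtrack h
  | fnConflict => exact viable_backtrack h
  | alt =>
    obtain ⟨f, hf, hsat⟩ := h
    exact .inr ⟨f, List.mem_cons_of_mem _ hf, hsat⟩
  | varBind | varBound | fn => exact .inr h

theorem Step.viable_of_satisfiable {σ : Subst} {stk : Stack} {k : Cont} {s : St}
    (hstep : Step (.running σ stk k) s) (h : Frame.Satisfiable (σ, k)) : s.Viable := by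
  obtain ⟨θ, hle, hall⟩ := h
  have hrest : ∀ a ∈ k.tail, a.Holds θ := fun a ha => hall a (List.mem_of_mem_tail ha)
  cases hstep with
  | success => trivial
  | varBind =>
    exact .inl ⟨θ, Subst.update_le hle (Matches.var_inv (hall _ List.mem_cons_self)), hrest⟩
  | varBound => exact .inl ⟨θ, hle, hrest⟩
  | varConflict hx hne =>
    have hθx := Matches.var_inv (hall _ List.mem_cons_self)
    rw [hle _ _ hx] at hθx
    exact absurd (Option.some.inj hθx) hne
  | fn =>
    have hargs := (Matches.app_inv (hall _ List.mem_cons_self)).2.2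
    refine .inl ⟨θ, hle, fun a ha => ?_⟩
    rcases List.mem_append.1 ha with ha | ha
    · exact hargs a ha
    · exact hrest a ha
  | fnConflict hne =>
    obtain ⟨rfl, hlen, -⟩ := Matches.app_inv (hall _ List.mem_cons_self)
    exact absurd hlen (hne.resolve_left (not_not_intro rfl))
  | @alt _ _ p p' t k =>
    have hsplit : ∀ q, Matches θ q t → ∀ a ∈ Action.doMatch q t :: k, a.Holds θ :=
      fun q hq => List.forall_mem_cons.2 ⟨hq, hrest⟩
    rcases Matches.alt_inv (hall _ List.mem_cons_self) with hp | hp'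
    · exact .inl ⟨θ, hle, hsplit p hp⟩
    · exact .inr ⟨_, List.mem_cons_self, θ, hle, hsplit p' hp'⟩

theorem Step.viable {s s' : St} (hstep : Step s s') (hs : s.Viable) : s'.Viable := by
  cases s with
  | success => cases hstep
  | failure => cases hstep
  | running σ stk k =>
    rcases hs with hcur | hstk
    · exact hstep.viable_of_satisfiable hcur
    · exact hstep.viable_of_stack hstk

theorem viable_of_transGen {s s' : St} (h : Relation.TransGen Step s s') (hs : s.Viable) :
    s'.Viable := by
  induction h with
  | single hstep => exact hstep.viable hs
  | tail _ hstep ih => exact hstep.viable ih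

end PyPM

open PyPM

/-- Algorithmic soundness (failure case). -/
theorem alg_soundness_failure {p : Pat} {t : Tm}
    (h : Relation.TransGen Step (.running emptySubst [] [.doMatch p t]) .failure) :
    ¬ ∃ θ : Subst, Matches θ p t := by
  rintro ⟨θ, hm⟩
  have hinit : St.Viable (.running emptySubst [] [.doMatch p t]) :=
    .inl ⟨θ, emptySubst_le θ, List.forall_mem_singleton.2 hm⟩
  exact viable_of_transGen h hinit
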